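/- The function x ↦ log(a_1(x)), where a_1(x) = ⌊1/(θx)⌋, is integrable on (0,θ) with respect to γ_θ, and ∫_0^θ log(a_1(x)) dγ_θ(x) = (1/log(1+θ²)) · Σ_{k=m}^{∞} log k · log(1 + 1/(k(k+2))), the series on the right being convergent. -/

import Mathlib

/-!
On the cylinder `(1/((k+1)θ), 1/(kθ)]` the digit `a₁ = ⌊1/(θx)⌋` equals `k`, and since `mθ² = 1`
these cylinders for `k ≥ m` tile `(0, θ]`. Integrating the density `θ/(1+θx)` over the `k`-th
cylinder gives `log((1+1/k)/(1+1/(k+1))) = log(1 + 1/(k(k+2)))`, so the integral of `log a₁` is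
the series `Σ log k · log(1 + 1/(k(k+2)))` divided by `log(1+θ²)`. The series converges because
its terms are `O(k^{-3/2})`, which is also what makes the piecewise constant function integrable.
-/

open MeasureTheory Real Set

/-- θ = 1/√m. -/
noncomputable def theta (m : ℕ) : ℝ := 1 / Real.sqrt m

/-- The θ-expansion transformation T_θ(x) = 1/x − θ·⌊1/(xθ)⌋ for x ≠ 0, T_θ(0) = 0. -/
noncomputable def Tmap (m : ℕ) (x : ℝ) : ℝ :=
  if x = 0 then 0 else 1 / x - theta m * (⌊1 / (x * theta m)⌋ : ℝ)

/-- The invariant measure γ_θ(A) = (1/log(1+θ²)) ∫_A θ/(1+θx) dx on [0,θ]. -/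
noncomputable def gammaMeasure (m : ℕ) : Measure ℝ :=
  (ENNReal.ofReal (1 / Real.log (1 + theta m ^ 2))) •
    ((volume.restrict (Icc 0 (theta m))).withDensity
      fun x => ENNReal.ofReal (theta m / (1 + theta m * x)))

lemma theta_pos {m : ℕ} (hm : 0 < m) : 0 < theta m := by
  unfold theta
  positivity

lemma one_div_natCast_mul_theta {m : ℕ} (hm : 0 < m) : 1 / (m * theta m) = theta m := by
  have hsqrt : 0 < Real.sqrt m := Real.sqrt_pos.2 (by exact_mod_cast hm)
  rw [theta]
  field_simp
  exact Real.sq_sqrt (Nat.cast_nonneg m)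

instance (m : ℕ) : NullSingletonClass (gammaMeasure m) :=
  ⟨fun x => by simp [gammaMeasure]⟩

section DigitCylinder

variable {θ x : ℝ} {k m : ℕ}

def digitCylinder (θ : ℝ) (k : ℕ) : Set ℝ :=
  Ioc (1 / ((k + 1) * θ)) (1 / (k * θ))

lemma mem_digitCylinder_iff (hθ : 0 < θ) (hk : 0 < k) (hx : 0 < x) :
    x ∈ digitCylinder θ k ↔ ⌊1 / (θ * x)⌋ = k := by
  have hk' : (0 : ℝ) < k := by exact_mod_cast hk
  rw [digitCylinder, mem_Ioc, Int.floor_eq_iff, div_lt_iff₀ (by positivity),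
    le_div_iff₀ (by positivity), le_div_iff₀ (by positivity), div_lt_iff₀ (by positivity)]
  push_cast
  constructor <;> rintro ⟨h₁, h₂⟩ <;> constructor <;> linarith

lemma pos_of_mem_digitCylinder (hθ : 0 < θ) (hx : x ∈ digitCylinder θ k) : 0 < x :=
  lt_of_le_of_lt (by positivity) hx.1

lemma floor_eq_of_mem_digitCylinder (hθ : 0 < θ) (hk : 0 < k) (hx : x ∈ digitCylinder θ k) :
    ⌊1 / (θ * x)⌋ = k :=
  (mem_digitCylinder_iff hθ hk (pos_of_mem_digitCylinder hθ hx)).1 hx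

lemma pairwise_disjoint_digitCylinder (hθ : 0 < θ) (hm : 0 < m) :
    Pairwise (Function.onFun Disjoint fun i => digitCylinder θ (i + m)) := by
  intro i j hij
  refine Set.disjoint_left.2 fun x hi hj => hij ?_
  have h := (floor_eq_of_mem_digitCylinder hθ (by omega) hi).symm.trans
    (floor_eq_of_mem_digitCylinder hθ (by omega) hj)
  omega

lemma iUnion_digitCylinder (hθ : 0 < θ) (hm : 0 < m) :
    ⋃ i, digitCylinder θ (i + m) = Ioc 0 (1 / (m * θ)) := by
  ext x
  rw [mem_iUnion]
  constructor
  · rintro ⟨i, hx⟩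
    refine ⟨pos_of_mem_digitCylinder hθ hx, hx.2.trans ?_⟩
    gcongr
    simp
  · rintro ⟨hx₀, hx⟩
    have hmx : (m : ℤ) ≤ ⌊1 / (θ * x)⌋ := by
      rw [Int.le_floor, Int.cast_natCast, le_div_iff₀ (by positivity)]
      rw [le_div_iff₀ (by positivity)] at hx
      linarith
    obtain ⟨i, hi⟩ : ∃ i : ℕ, ⌊1 / (θ * x)⌋ = ((i + m : ℕ) : ℤ) :=
      ⟨(⌊1 / (θ * x)⌋ - m).toNat, by omega⟩
    exact ⟨i, (mem_digitCylinder_iff hθ (by omega) hx₀).2 hi⟩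

end DigitCylinder

lemma integral_div_one_add_mul {θ a b : ℝ} (hθ : 0 ≤ θ) (ha : 0 ≤ a) (hab : a ≤ b) :
    ∫ x in a..b, θ / (1 + θ * x) = log ((1 + θ * b) / (1 + θ * a)) := by
  have h : (fun x => θ / (1 + θ * x)) = fun x => θ * (θ * x + 1)⁻¹ := by
    funext x
    rw [div_eq_mul_inv, add_comm]
  have hsub :=
    intervalIntegral.mul_integral_comp_mul_add (a := a) (b := b) (f := fun x : ℝ => x⁻¹) θ 1
  rw [h, intervalIntegral.integral_const_mul, hsub,
    integral_inv_of_pos (by positivity) (by nlinarith), add_comm (θ * b), add_comm (θ * a)]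

lemma gammaMeasure_Ioc {m : ℕ} {a b : ℝ} (ha : 0 ≤ a) (hab : a ≤ b)
    (hb : b ≤ theta m) :
    gammaMeasure m (Ioc a b) = ENNReal.ofReal
      (log ((1 + theta m * b) / (1 + theta m * a)) / log (1 + theta m ^ 2)) := by
  have hθ : 0 ≤ theta m := by
    unfold theta
    positivity
  have hdens : ContinuousOn (fun x => theta m / (1 + theta m * x)) (Icc a b) :=
    continuousOn_const.div (by fun_prop) fun x hx => by nlinarith [hx.1]
  rw [gammaMeasure, Measure.smul_apply, smul_eq_mul, withDensity_apply _ measurableSet_Ioc,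
    Measure.restrict_restrict measurableSet_Ioc,
    inter_eq_self_of_subset_left (Ioc_subset_Icc_self.trans (Icc_subset_Icc ha hb)),
    ← ofReal_integral_eq_lintegral_ofReal
      ((hdens.integrableOn_Icc).mono_set Ioc_subset_Icc_self)
      (ae_restrict_of_forall_mem measurableSet_Ioc fun x hx => by
        have := ha.trans_lt hx.1
        positivity),
    ← intervalIntegral.integral_of_le hab, integral_div_one_add_mul hθ ha hab,
    ← ENNReal.ofReal_mul (one_div_nonneg.2 (log_nonneg (by nlinarith))), one_div_mul_eq_div]

lemma gammaMeasure_digitCylinder {m k : ℕ} (hm : 0 < m) (hk : m ≤ k) :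
    gammaMeasure m (digitCylinder (theta m) k) =
      ENNReal.ofReal (log (1 + 1 / (k * (k + 2))) / log (1 + theta m ^ 2)) := by
  have hθ := theta_pos hm
  have hk' : (0 : ℝ) < k := by exact_mod_cast hm.trans_le hk
  have hmk : (m : ℝ) ≤ k := by exact_mod_cast hk
  rw [digitCylinder, gammaMeasure_Ioc (by positivity) (by gcongr; linarith)]
  · congr 3
    field_simp
    ring
  · exact (one_div_le_one_div_of_le (by positivity) (by gcongr)).trans_eq
      (one_div_natCast_mul_theta hm)

lemma measureReal_gammaMeasure_digitCylinder {m k : ℕ} (hm : 0 < m) (hk : m ≤ k) :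
    (gammaMeasure m).real (digitCylinder (theta m) k) =
      log (1 + 1 / (k * (k + 2))) / log (1 + theta m ^ 2) := by
  rw [measureReal_def, gammaMeasure_digitCylinder hm hk, ENNReal.toReal_ofReal
    (div_nonneg (log_nonneg (le_add_of_nonneg_right (by positivity)))
      (log_nonneg (le_add_of_nonneg_right (sq_nonneg _))))]

lemma summable_log_mul_log_one_add_inv :
    Summable fun n : ℕ => log n * log (1 + 1 / (n * (n + 2))) := by
  refine Summable.of_nonneg_of_le (fun n => ?_) (fun n => ?_)
    ((Real.summable_nat_rpow.2 (by norm_num : (-3 / 2 : ℝ) < -1)).mul_left 2)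
  · exact mul_nonneg (log_natCast_nonneg n) (log_nonneg (le_add_of_nonneg_right (by positivity)))
  · rcases Nat.eq_zero_or_pos n with rfl | hn
    · simp
    have hn' : (0 : ℝ) < n := by exact_mod_cast hn
    have hlog : log n ≤ 2 * (n : ℝ) ^ (1 / 2 : ℝ) := by
      have := log_natCast_le_rpow_div n (by norm_num : (0 : ℝ) < 1 / 2)
      linarith
    have hlog_one_add : log (1 + 1 / (n * (n + 2))) ≤ (n : ℝ) ^ (-2 : ℝ) :=
      calc log (1 + 1 / (n * (n + 2))) ≤ 1 / (n * (n + 2)) := by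
            linarith [log_le_sub_one_of_pos (by positivity : (0 : ℝ) < 1 + 1 / (n * (n + 2)))]
        _ ≤ 1 / (n * n) := by gcongr; linarith
        _ = (n : ℝ) ^ (-2 : ℝ) := by rw [rpow_neg hn'.le, rpow_two, sq, one_div]
    calc log n * log (1 + 1 / (n * (n + 2)))
        ≤ 2 * (n : ℝ) ^ (1 / 2 : ℝ) * (n : ℝ) ^ (-2 : ℝ) :=
          mul_le_mul hlog hlog_one_add (log_nonneg (le_add_of_nonneg_right (by positivity)))
            (by positivity)
      _ = 2 * (n : ℝ) ^ (-3 / 2 : ℝ) := by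
          rw [mul_assoc, ← rpow_add hn']
          norm_num

section PiecewiseConstant

variable {ι α : Type*} [Countable ι] [MeasurableSpace α] {μ : Measure α} {s : ι → Set α}
  {f : α → ℝ} {c : ι → ℝ}

lemma integrableOn_iUnion_of_eqOn_const (hs : ∀ i, MeasurableSet (s i)) (hfin : ∀ i, μ (s i) ≠ ⊤)
    (hf : ∀ i, EqOn f (fun _ => c i) (s i)) (hsum : Summable fun i => ‖c i‖ * μ.real (s i)) :
    IntegrableOn f (⋃ i, s i) μ := by
  refine integrableOn_iUnion_of_summable_integral_norm
    (fun i => (integrableOn_const (hfin i)).congr_fun (hf i).symm (hs i)) (hsum.congr fun i => ?_)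
  rw [setIntegral_congr_fun (hs i) fun x hx => congrArg norm (hf i hx), setIntegral_const,
    smul_eq_mul, mul_comm]

lemma integral_iUnion_of_eqOn_const (hs : ∀ i, MeasurableSet (s i))
    (hd : Pairwise (Function.onFun Disjoint s)) (hfin : ∀ i, μ (s i) ≠ ⊤)
    (hf : ∀ i, EqOn f (fun _ => c i) (s i)) (hsum : Summable fun i => ‖c i‖ * μ.real (s i)) :
    ∫ x in ⋃ i, s i, f x ∂μ = ∑' i, c i * μ.real (s i) := by
  rw [integral_iUnion hs hd (integrableOn_iUnion_of_eqOn_const hs hfin hf hsum)]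
  congr 1 with i
  rw [setIntegral_congr_fun (hs i) (hf i), setIntegral_const, smul_eq_mul, mul_comm]

end PiecewiseConstant

theorem log_digit_integrable_general (m : ℕ) (hm : 2 ≤ m) :
    IntegrableOn (fun x => Real.log ((⌊1 / (theta m * x)⌋ : ℤ) : ℝ))
        (Ioo 0 (theta m)) (gammaMeasure m) ∧
      Summable (fun k : ℕ =>
        Real.log ((k + m : ℕ) : ℝ) *
          Real.log (1 + 1 / (((k + m : ℕ) : ℝ) * (((k + m : ℕ) : ℝ) + 2)))) ∧
      ∫ x in Ioo 0 (theta m),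
          Real.log ((⌊1 / (theta m * x)⌋ : ℤ) : ℝ) ∂(gammaMeasure m) =
        (1 / Real.log (1 + theta m ^ 2)) *
          ∑' k : ℕ,
            Real.log ((k + m : ℕ) : ℝ) *
              Real.log (1 + 1 / (((k + m : ℕ) : ℝ) * (((k + m : ℕ) : ℝ) + 2))) := by
  have hm₀ : 0 < m := by omega
  have hθ := theta_pos hm₀
  set s : ℕ → Set ℝ := fun i => digitCylinder (theta m) (i + m)
  have hs : ∀ i, MeasurableSet (s i) := fun i => measurableSet_Ioc
  have hfin : ∀ i, gammaMeasure m (s i) ≠ ⊤ := fun i => by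
    simp [s, gammaMeasure_digitCylinder hm₀ (Nat.le_add_left m i)]
  have hdigit : ∀ i, EqOn (fun x => log ((⌊1 / (theta m * x)⌋ : ℤ) : ℝ))
      (fun _ => log ((i + m : ℕ) : ℝ)) (s i) := fun i x hx => by
    simp only [floor_eq_of_mem_digitCylinder hθ (by omega) hx, Int.cast_natCast]
  have hterm : ∀ i, log ((i + m : ℕ) : ℝ) * (gammaMeasure m).real (s i) =
      1 / log (1 + theta m ^ 2) * (log ((i + m : ℕ) : ℝ) *
        log (1 + 1 / (((i + m : ℕ) : ℝ) * (((i + m : ℕ) : ℝ) + 2)))) := fun i => by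
    rw [measureReal_gammaMeasure_digitCylinder hm₀ (Nat.le_add_left m i)]
    ring
  have hsum := (summable_nat_add_iff m).2 summable_log_mul_log_one_add_inv
  have hsum_norm : Summable fun i => ‖log ((i + m : ℕ) : ℝ)‖ * (gammaMeasure m).real (s i) := by
    simp_rw [norm_of_nonneg (log_natCast_nonneg _), hterm]
    exact hsum.mul_left _
  have hIoo : Ioo 0 (theta m) =ᵐ[gammaMeasure m] ⋃ i, s i := by
    rw [iUnion_digitCylinder hθ hm₀, one_div_natCast_mul_theta hm₀]
    exact Ioo_ae_eq_Ioc
  refine ⟨(integrableOn_iUnion_of_eqOn_const hs hfin hdigit hsum_norm).congr_set_ae hIoo, hsum, ?_⟩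
  rw [setIntegral_congr_set hIoo, integral_iUnion_of_eqOn_const hs
    (pairwise_disjoint_digitCylinder hθ hm₀) hfin hdigit hsum_norm, ← tsum_mul_left]
  exact tsum_congr hterm

/-- x ↦ log a₁(x) with a₁(x) = ⌊1/(θx)⌋ is γ_θ-integrable on (0,θ) and
∫₀^θ log a₁ dγ_θ = (1/log(1+θ²)) Σ_{k≥m} log k · log(1 + 1/(k(k+2))),
the series being convergent. -/
theorem log_digit_integrable (m : ℕ) (hm : 2 ≤ m) (hns : ¬ IsSquare m) :
    IntegrableOn (fun x => Real.log ((⌊1 / (theta m * x)⌋ : ℤ) : ℝ))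
        (Ioo 0 (theta m)) (gammaMeasure m) ∧
      Summable (fun k : ℕ =>
        Real.log ((k + m : ℕ) : ℝ) *
          Real.log (1 + 1 / (((k + m : ℕ) : ℝ) * (((k + m : ℕ) : ℝ) + 2)))) ∧
      ∫ x in Ioo 0 (theta m),
          Real.log ((⌊1 / (theta m * x)⌋ : ℤ) : ℝ) ∂(gammaMeasure m) =
        (1 / Real.log (1 + theta m ^ 2)) *
          ∑' k : ℕ,
            Real.log ((k + m : ℕ) : ℝ) *
              Real.log (1 + 1 / (((k + m : ℕ) : ℝ) * (((k + m : ℕ) : ℝ) + 2))) :=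
  log_digit_integrable_general m hm
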